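/- (Mean-zero property of the efficient influence function.) In the capture-recapture setup, assume MAR and positivity, and define 1/γ(v,x) = 1 + Π_{y ≠ 0} q_y(v,x)^{(−1)^{|y|+1}} and assume E_Q[1/γ(V,X)] = 1/ψ (which holds under the NHOI conditional log-linear model). Let m(v) = E_Q[ 1/γ(V,X) − 1 | V=v ] and define, for an observation z = (y,v,x,r) with y ≠ 0, φ(z) = Σ_{y' ≠ 0} (−1)^{1+|y'|} { (r·1(y=y') / π(y',v)) · [ (1/q_{y'}(v,x))(1/γ(v,x) − 1) − (1/q_{y'}(v)) m(v) ] + (1(y=y')/q_{y'}(v)) m(v) } − (1/ψ − 1). Then E_Q[ φ(Y,V,X,R) ] = 0. -/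

import Mathlib

open scoped Classical
open Finset

/-!
Fix a nonempty `y'` and condition on `(V, X)`. By MAR,
`P(V, X, Y = y', R = 1) = π(y', V) P(V, X, Y = y')`, so the inverse-probability weight
`R 1(Y = y') / π(y', V)` integrates like `1(Y = y')`; this cancels the two terms carrying `m`.
Likewise `1(Y = y') / q_{y'}(V, X)` integrates like `1(Y ≠ 0)`, so the `y'`-th summand of `φ`
has `Q`-mean `E_Q[1/γ(V,X)] - 1 = 1/ψ - 1`. Since `∑_{y' ≠ 0} (-1)^{1+|y'|} = 1`, the summands
add up to `1/ψ - 1`, which is exactly the constant subtracted in `φ`.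
-/

/-- Probability `P(A)` of an event `A` under a probability weight `w` on a finite
outcome space `Ω`. -/
noncomputable def pr {Ω : Type*} [Fintype Ω] (w : Ω → ℝ) (A : Ω → Prop) : ℝ :=
  ∑ ω, if A ω then w ω else 0

/-- Conditional probability `P(A | B)` under the weight `w`. -/
noncomputable def cpr {Ω : Type*} [Fintype Ω] (w : Ω → ℝ) (A B : Ω → Prop) : ℝ :=
  pr w (fun ω => A ω ∧ B ω) / pr w B

/-- Conditional expectation `E[f | B]` under the weight `w`. -/
noncomputable def cexp {Ω : Type*} [Fintype Ω] (w : Ω → ℝ) (f : Ω → ℝ) (B : Ω → Prop) : ℝ :=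
  (∑ ω, if B ω then w ω * f ω else 0) / pr w B

/-- Full conditional q-probability `q_y(v,x) = Q(Y = y | V = v, X = x)`, where `Q` is the
law of the data conditional on capture (`Y ≠ 0`). -/
noncomputable def qfull {Ω 𝒱 𝒳 : Type*} [Fintype Ω] {K : ℕ}
    (w : Ω → ℝ) (Y : Ω → Finset (Fin K)) (V : Ω → 𝒱) (X : Ω → 𝒳)
    (y : Finset (Fin K)) (v : 𝒱) (x : 𝒳) : ℝ :=
  cpr w (fun ω => Y ω = y) (fun ω => V ω = v ∧ X ω = x ∧ Y ω ≠ ∅)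

/-- `V`-only conditional q-probability `q_y(v) = Q(Y = y | V = v)`. -/
noncomputable def qV {Ω 𝒱 : Type*} [Fintype Ω] {K : ℕ}
    (w : Ω → ℝ) (Y : Ω → Finset (Fin K)) (V : Ω → 𝒱)
    (y : Finset (Fin K)) (v : 𝒱) : ℝ :=
  cpr w (fun ω => Y ω = y) (fun ω => V ω = v ∧ Y ω ≠ ∅)

/-- Covariate distribution among the fully observed,
`λ_x(y,v) = Q(X = x | Y = y, V = v, R = 1)`. -/
noncomputable def lam {Ω 𝒱 𝒳 : Type*} [Fintype Ω] {K : ℕ}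
    (w : Ω → ℝ) (Y : Ω → Finset (Fin K)) (V : Ω → 𝒱) (X : Ω → 𝒳) (R : Ω → Bool)
    (x : 𝒳) (y : Finset (Fin K)) (v : 𝒱) : ℝ :=
  cpr w (fun ω => X ω = x) (fun ω => Y ω = y ∧ V ω = v ∧ R ω = true ∧ Y ω ≠ ∅)

/-- Missingness propensity score `π(y,v) = Q(R = 1 | Y = y, V = v)`. -/
noncomputable def piR {Ω 𝒱 : Type*} [Fintype Ω] {K : ℕ}
    (w : Ω → ℝ) (Y : Ω → Finset (Fin K)) (V : Ω → 𝒱) (R : Ω → Bool)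
    (y : Finset (Fin K)) (v : 𝒱) : ℝ :=
  cpr w (fun ω => R ω = true) (fun ω => Y ω = y ∧ V ω = v ∧ Y ω ≠ ∅)

theorem sum_ne_empty_neg_one_pow_one_add_card {α R : Type*} [Fintype α] [DecidableEq α]
    [Nonempty α] [CommRing R] :
    ∑ s ∈ Finset.univ.filter (fun s : Finset α => s ≠ ∅), (-1 : R) ^ (1 + s.card) = 1 := by
  have h := congrArg (Int.cast : ℤ → R)
    (Finset.sum_powerset_neg_one_pow_card_of_nonempty (univ_nonempty (α := α)))
  rw [powerset_univ] at h
  push_cast at h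
  rw [filter_ne' univ, sum_erase_eq_sub (mem_univ _)]
  simp only [pow_add, pow_one, ← mul_sum, h]
  simp

section WeightedSums

variable {Ω : Type*} [Fintype Ω] {w : Ω → ℝ}

variable (w) in
theorem pr_congr {A B : Ω → Prop} (h : ∀ ω, A ω ↔ B ω) : pr w A = pr w B := by
  simp only [pr, h]

theorem pr_nonneg (hw : ∀ ω, 0 ≤ w ω) (A : Ω → Prop) : 0 ≤ pr w A :=
  sum_nonneg fun ω _ => by split_ifs <;> simp [hw ω]

theorem pr_mono (hw : ∀ ω, 0 ≤ w ω) {A B : Ω → Prop} (h : ∀ ω, A ω → B ω) :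
    pr w A ≤ pr w B :=
  sum_le_sum fun ω _ => by
    by_cases hA : A ω
    · simp [hA, h ω hA]
    · split_ifs <;> simp [hw ω]

theorem pr_and_eq_cpr_mul (hw : ∀ ω, 0 ≤ w ω) (A B : Ω → Prop) :
    pr w (fun ω => A ω ∧ B ω) = cpr w A B * pr w B := by
  rcases (pr_nonneg hw B).eq_or_lt with hB | hB
  · rw [← hB, mul_zero]
    exact le_antisymm (hB ▸ pr_mono hw fun ω h => h.2) (pr_nonneg hw _)
  · rw [cpr, div_mul_cancel₀ _ hB.ne']

variable (w) in
theorem sum_ite_mul_const (A : Ω → Prop) [DecidablePred A] (c : ℝ) :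
    ∑ ω, (if A ω then w ω * c else 0) = c * pr w A := by
  simp only [pr, mul_sum]
  exact sum_congr rfl fun ω _ => by split_ifs <;> ring

theorem cexp_eq_sum_div (f : Ω → ℝ) (B : Ω → Prop) [DecidablePred B] :
    cexp w f B = (∑ ω, if B ω then w ω * f ω else 0) / pr w B := by
  simp only [cexp]
  exact congrArg (· / pr w B) (sum_congr rfl fun ω _ => by congr)

theorem sum_ite_mul_sub_const {B : Ω → Prop} [DecidablePred B] (hB : pr w B ≠ 0) (f : Ω → ℝ)
    (c : ℝ) : ∑ ω, (if B ω then w ω * (f ω - c) else 0) = (cexp w f B - c) * pr w B := by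
  rw [cexp_eq_sum_div, sub_mul, div_mul_cancel₀ _ hB, ← sum_ite_mul_const, ← sum_sub_distrib]
  exact sum_congr rfl fun ω _ => by split_ifs <;> ring

theorem sum_ite_mul_sum_sub_const {ι : Type*} (B : Ω → Prop) [DecidablePred B] (S : Finset ι)
    (a : ι → ℝ) (s : ι → Ω → ℝ) (c : ℝ) :
    ∑ ω, (if B ω then w ω * (∑ i ∈ S, a i * s i ω - c) else 0)
      = ∑ i ∈ S, a i * ∑ ω, (if B ω then w ω * s i ω else 0) - c * pr w B := by
  simp only [← sum_ite_mul_const, mul_sum]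
  rw [sum_comm, ← sum_sub_distrib]
  exact sum_congr rfl fun ω _ => by split_ifs <;> simp [mul_sub, mul_sum, mul_left_comm]

variable (w) in
theorem sum_ite_mul_comp_eq_sum_image {β : Type*} [DecidableEq β] (Z : Ω → β) (A : Ω → Prop)
    [DecidablePred A] (g : β → ℝ) :
    ∑ ω, (if A ω then w ω * g (Z ω) else 0)
      = ∑ b ∈ univ.image Z, g b * pr w (fun ω => Z ω = b ∧ A ω) := by
  rw [← sum_fiberwise_of_maps_to fun ω _ => mem_image_of_mem Z (mem_univ ω)]
  refine sum_congr rfl fun b _ => ?_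
  rw [pr, mul_sum, sum_filter]
  refine sum_congr rfl fun ω _ => ?_
  by_cases hZ : Z ω = b <;> by_cases hA : A ω <;> simp [hZ, hA, mul_comm]

end WeightedSums

section CaptureRecapture

variable {Ω 𝒱 𝒳 : Type*} [Fintype Ω] {K : ℕ} {w : Ω → ℝ} {Y : Ω → Finset (Fin K)}
  {V : Ω → 𝒱} {X : Ω → 𝒳} {R : Ω → Bool}

def MissingAtRandom (w : Ω → ℝ) (Y : Ω → Finset (Fin K)) (V : Ω → 𝒱) (X : Ω → 𝒳)
    (R : Ω → Bool) : Prop :=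
  ∀ (y : Finset (Fin K)) (v : 𝒱) (x : 𝒳) (r : Bool),
    0 < pr w (fun ω => Y ω = y ∧ V ω = v ∧ Y ω ≠ ∅) →
    cpr w (fun ω => X ω = x ∧ R ω = r) (fun ω => Y ω = y ∧ V ω = v ∧ Y ω ≠ ∅)
      = cpr w (fun ω => X ω = x) (fun ω => Y ω = y ∧ V ω = v ∧ Y ω ≠ ∅)
        * cpr w (fun ω => R ω = r) (fun ω => Y ω = y ∧ V ω = v ∧ Y ω ≠ ∅)

theorem pr_eq_qfull_mul (hw : ∀ ω, 0 ≤ w ω) {y : Finset (Fin K)} (hy : y ≠ ∅) (v : 𝒱) (x : 𝒳) :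
    pr w (fun ω => (V ω, X ω) = (v, x) ∧ Y ω = y)
      = qfull w Y V X y v x * pr w (fun ω => (V ω, X ω) = (v, x) ∧ Y ω ≠ ∅) := by
  calc pr w (fun ω => (V ω, X ω) = (v, x) ∧ Y ω = y)
      = pr w (fun ω => Y ω = y ∧ V ω = v ∧ X ω = x ∧ Y ω ≠ ∅) :=
        pr_congr w fun ω => by
          constructor
          · rintro ⟨hvx, rfl⟩; simp_all
          · rintro ⟨rfl, hv, hx, -⟩; simp [hv, hx]
    _ = qfull w Y V X y v x * pr w (fun ω => V ω = v ∧ X ω = x ∧ Y ω ≠ ∅) :=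
        pr_and_eq_cpr_mul hw _ _
    _ = _ := by simp only [Prod.mk.injEq, and_assoc]

theorem pr_eq_piR_mul (hw : ∀ ω, 0 ≤ w ω) (hMAR : MissingAtRandom w Y V X R)
    {y : Finset (Fin K)} (hy : y ≠ ∅) (v : 𝒱) (x : 𝒳) :
    pr w (fun ω => (V ω, X ω) = (v, x) ∧ Y ω = y ∧ R ω = true)
      = piR w Y V R y v * pr w (fun ω => (V ω, X ω) = (v, x) ∧ Y ω = y) := by
  set B : Ω → Prop := fun ω => Y ω = y ∧ V ω = v ∧ Y ω ≠ ∅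
  calc pr w (fun ω => (V ω, X ω) = (v, x) ∧ Y ω = y ∧ R ω = true)
      = pr w (fun ω => (X ω = x ∧ R ω = true) ∧ B ω) :=
        pr_congr w fun ω => by
          constructor
          · rintro ⟨hvx, rfl, hr⟩; simp_all [B]
          · rintro ⟨⟨hx, hr⟩, rfl, hv, -⟩; simp [hv, hx, hr]
    _ = cpr w (fun ω => X ω = x ∧ R ω = true) B * pr w B := pr_and_eq_cpr_mul hw _ _
    _ = piR w Y V R y v * (cpr w (fun ω => X ω = x) B * pr w B) := by
        rcases (pr_nonneg hw B).eq_or_lt with hB | hB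
        · simp [← hB]
        · rw [hMAR y v x true hB, piR]; ring
    _ = piR w Y V R y v * pr w (fun ω => X ω = x ∧ B ω) := by
        rw [pr_and_eq_cpr_mul hw (fun ω => X ω = x) B]
    _ = _ := by
        congr 1
        refine pr_congr w fun ω => ?_
        constructor
        · rintro ⟨hx, rfl, hv, -⟩; simp [hv, hx]
        · rintro ⟨hvx, rfl⟩; simp_all [B]

theorem sum_ite_div_qfull (hw : ∀ ω, 0 ≤ w ω) {y : Finset (Fin K)} (hy : y ≠ ∅)
    (hq : ∀ v x, 0 < pr w (fun ω => V ω = v ∧ X ω = x ∧ Y ω ≠ ∅) → 0 < qfull w Y V X y v x)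
    (g : 𝒱 → 𝒳 → ℝ) :
    ∑ ω, (if Y ω = y then w ω * (g (V ω) (X ω) / qfull w Y V X y (V ω) (X ω)) else 0)
      = ∑ ω, if Y ω ≠ ∅ then w ω * g (V ω) (X ω) else 0 := by
  calc _ = ∑ p ∈ univ.image (fun ω => (V ω, X ω)), g p.1 p.2 / qfull w Y V X y p.1 p.2
          * pr w (fun ω => (V ω, X ω) = p ∧ Y ω = y) :=
        sum_ite_mul_comp_eq_sum_image w _ _ fun p : 𝒱 × 𝒳 => g p.1 p.2 / qfull w Y V X y p.1 p.2
    _ = ∑ p ∈ univ.image (fun ω => (V ω, X ω)), g p.1 p.2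
          * pr w (fun ω => (V ω, X ω) = p ∧ Y ω ≠ ∅) := by
        refine sum_congr rfl fun ⟨v, x⟩ _ => ?_
        rw [pr_eq_qfull_mul hw hy v x]
        rcases (pr_nonneg hw fun ω => (V ω, X ω) = (v, x) ∧ Y ω ≠ ∅).eq_or_lt with h0 | hP
        · rw [← h0]; ring
        · have := hq v x (by simpa only [Prod.mk.injEq, and_assoc] using hP)
          field_simp
    _ = _ := (sum_ite_mul_comp_eq_sum_image w _ _ fun p : 𝒱 × 𝒳 => g p.1 p.2).symm

theorem sum_ite_div_piR (hw : ∀ ω, 0 ≤ w ω) (hMAR : MissingAtRandom w Y V X R)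
    {y : Finset (Fin K)} (hy : y ≠ ∅)
    (hπ : ∀ v x, 0 < pr w (fun ω => V ω = v ∧ X ω = x ∧ Y ω ≠ ∅) → 0 < piR w Y V R y v)
    (f : 𝒱 → 𝒳 → ℝ) :
    ∑ ω, (if Y ω = y ∧ R ω = true then w ω * (f (V ω) (X ω) / piR w Y V R y (V ω)) else 0)
      = ∑ ω, if Y ω = y then w ω * f (V ω) (X ω) else 0 := by
  calc _ = ∑ p ∈ univ.image (fun ω => (V ω, X ω)), f p.1 p.2 / piR w Y V R y p.1
          * pr w (fun ω => (V ω, X ω) = p ∧ Y ω = y ∧ R ω = true) :=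
        sum_ite_mul_comp_eq_sum_image w _ _ fun p : 𝒱 × 𝒳 => f p.1 p.2 / piR w Y V R y p.1
    _ = ∑ p ∈ univ.image (fun ω => (V ω, X ω)), f p.1 p.2
          * pr w (fun ω => (V ω, X ω) = p ∧ Y ω = y) := by
        refine sum_congr rfl fun ⟨v, x⟩ _ => ?_
        rw [pr_eq_piR_mul hw hMAR hy v x]
        rcases (pr_nonneg hw fun ω => (V ω, X ω) = (v, x) ∧ Y ω = y).eq_or_lt with h0 | hP
        · rw [← h0]; ring
        · have := hπ v x <| hP.trans_le <| pr_mono hw fun ω ⟨hvx, hY⟩ =>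
            ⟨congrArg Prod.fst hvx, congrArg Prod.snd hvx, hY ▸ hy⟩
          field_simp
    _ = _ := (sum_ite_mul_comp_eq_sum_image w _ _ fun p : 𝒱 × 𝒳 => f p.1 p.2).symm

/-- The `y'`-th summand of `φ` at the observation `(y, v, x, r)`. -/
noncomputable def eifSummand (w : Ω → ℝ) (Y : Ω → Finset (Fin K)) (V : Ω → 𝒱) (X : Ω → 𝒳)
    (R : Ω → Bool) (gi : 𝒱 → 𝒳 → ℝ) (m : 𝒱 → ℝ) (y' y : Finset (Fin K)) (v : 𝒱) (x : 𝒳)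
    (r : Bool) : ℝ :=
  ((if r = true then (1 : ℝ) else 0) * (if y = y' then (1 : ℝ) else 0)) / piR w Y V R y' v *
      ((1 / qfull w Y V X y' v x) * (gi v x - 1) - (1 / qV w Y V y' v) * m v)
    + (if y = y' then (1 : ℝ) else 0) / qV w Y V y' v * m v

theorem sum_ite_mul_eifSummand (hw : ∀ ω, 0 ≤ w ω) (hMAR : MissingAtRandom w Y V X R)
    {y : Finset (Fin K)} (hy : y ≠ ∅)
    (hq : ∀ v x, 0 < pr w (fun ω => V ω = v ∧ X ω = x ∧ Y ω ≠ ∅) → 0 < qfull w Y V X y v x)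
    (hπ : ∀ v x, 0 < pr w (fun ω => V ω = v ∧ X ω = x ∧ Y ω ≠ ∅) → 0 < piR w Y V R y v)
    (gi : 𝒱 → 𝒳 → ℝ) (m : 𝒱 → ℝ) :
    ∑ ω, (if Y ω ≠ ∅ then w ω * eifSummand w Y V X R gi m y (Y ω) (V ω) (X ω) (R ω) else 0)
      = ∑ ω, if Y ω ≠ ∅ then w ω * (gi (V ω) (X ω) - 1) else 0 := by
  set f : 𝒱 → 𝒳 → ℝ := fun v x => (gi v x - 1) / qfull w Y V X y v x - m v / qV w Y V y v
  have hsplit : ∀ ω, (if Y ω ≠ ∅ then w ω * eifSummand w Y V X R gi m y (Y ω) (V ω) (X ω) (R ω)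
      else 0) = (if Y ω = y ∧ R ω = true then w ω * (f (V ω) (X ω) / piR w Y V R y (V ω)) else 0)
        + (if Y ω = y then w ω * (m (V ω) / qV w Y V y (V ω)) else 0) := by
    intro ω
    by_cases hY : Y ω = y
    · subst hY
      cases R ω
      · simp [eifSummand, hy, div_eq_inv_mul]
      · simp [eifSummand, hy, f]; ring
    · by_cases hY0 : Y ω = ∅ <;> simp [eifSummand, hY, hY0, hy.symm]
  calc _ = ∑ ω, (if Y ω = y ∧ R ω = true then w ω * (f (V ω) (X ω) / piR w Y V R y (V ω)) else 0)
          + ∑ ω, (if Y ω = y then w ω * (m (V ω) / qV w Y V y (V ω)) else 0) := by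
        rw [← sum_add_distrib]
        exact sum_congr rfl fun ω _ => hsplit ω
    _ = ∑ ω, if Y ω = y then w ω * ((gi (V ω) (X ω) - 1) / qfull w Y V X y (V ω) (X ω)) else 0 := by
        rw [sum_ite_div_piR hw hMAR hy hπ f, ← sum_add_distrib]
        refine sum_congr rfl fun ω _ => ?_
        split_ifs
        · simp only [f]; ring
        · simp
    _ = _ := sum_ite_div_qfull hw hy hq fun v x => gi v x - 1

end CaptureRecapture

theorem eif_mean_zero_general
    {Ω 𝒱 𝒳 : Type*} [Fintype Ω] {K : ℕ} (hK : 1 ≤ K)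
    (w : Ω → ℝ) (Y : Ω → Finset (Fin K)) (V : Ω → 𝒱) (X : Ω → 𝒳) (R : Ω → Bool)
    (hw0 : ∀ ω, 0 ≤ w ω)
    (hψ : 0 < pr w (fun ω => Y ω ≠ ∅))
    -- MAR: X and R are conditionally independent given (V, Y) under Q
    (hMAR : ∀ (y : Finset (Fin K)) (v : 𝒱) (x : 𝒳) (r : Bool),
      0 < pr w (fun ω => Y ω = y ∧ V ω = v ∧ Y ω ≠ ∅) →
      cpr w (fun ω => X ω = x ∧ R ω = r) (fun ω => Y ω = y ∧ V ω = v ∧ Y ω ≠ ∅)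
        = cpr w (fun ω => X ω = x) (fun ω => Y ω = y ∧ V ω = v ∧ Y ω ≠ ∅)
          * cpr w (fun ω => R ω = r) (fun ω => Y ω = y ∧ V ω = v ∧ Y ω ≠ ∅))
    -- positivity: q_y(v,x), q_y(v), π(y,v) > 0 on the support
    (hpos : ∀ y : Finset (Fin K), y ≠ ∅ → ∀ (v : 𝒱) (x : 𝒳),
      0 < pr w (fun ω => V ω = v ∧ X ω = x ∧ Y ω ≠ ∅) →
      0 < qfull w Y V X y v x ∧ 0 < qV w Y V y v ∧ 0 < piR w Y V R y v)
    -- gi v x = 1/γ(v,x) = 1 + Π_{y ≠ 0} q_y(v,x)^{(−1)^{|y|+1}}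
    (gi : 𝒱 → 𝒳 → ℝ)
    -- E_Q[1/γ(V,X)] = 1/ψ
    (hid : cexp w (fun ω => gi (V ω) (X ω)) (fun ω => Y ω ≠ ∅)
      = 1 / pr w (fun ω => Y ω ≠ ∅))
    -- m(v) = E_Q[1/γ(V,X) − 1 | V = v]
    (m : 𝒱 → ℝ)
    -- the efficient influence function φ(z) for z = (y,v,x,r) with y ≠ 0
    (φ : Finset (Fin K) → 𝒱 → 𝒳 → Bool → ℝ)
    (hφ : ∀ (y : Finset (Fin K)) (v : 𝒱) (x : 𝒳) (r : Bool), φ y v x r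
      = (∑ y' ∈ Finset.univ.filter (fun y' : Finset (Fin K) => y' ≠ ∅),
          (-1 : ℝ) ^ (1 + y'.card) *
            (((if r = true then (1 : ℝ) else 0) * (if y = y' then (1 : ℝ) else 0))
                / piR w Y V R y' v *
              ((1 / qfull w Y V X y' v x) * (gi v x - 1)
                - (1 / qV w Y V y' v) * m v)
            + (if y = y' then (1 : ℝ) else 0) / qV w Y V y' v * m v))
        - (1 / pr w (fun ω => Y ω ≠ ∅) - 1)) :
    cexp w (fun ω => φ (Y ω) (V ω) (X ω) (R ω)) (fun ω => Y ω ≠ ∅) = 0 := by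
  set ψ := pr w (fun ω => Y ω ≠ ∅)
  set S := univ.filter (fun y : Finset (Fin K) => y ≠ ∅)
  have : Nonempty (Fin K) := ⟨⟨0, hK⟩⟩
  have hnum : ∑ ω, (if Y ω ≠ ∅ then w ω * φ (Y ω) (V ω) (X ω) (R ω) else 0) = 0 := calc
    _ = ∑ ω, if Y ω ≠ ∅ then w ω * (∑ y' ∈ S, (-1 : ℝ) ^ (1 + y'.card)
          * eifSummand w Y V X R gi m y' (Y ω) (V ω) (X ω) (R ω) - (1 / ψ - 1)) else 0 := by
        simp only [hφ, eifSummand]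
    _ = ∑ y' ∈ S, (-1 : ℝ) ^ (1 + y'.card)
          * ∑ ω, (if Y ω ≠ ∅ then w ω * eifSummand w Y V X R gi m y' (Y ω) (V ω) (X ω) (R ω)
            else 0) - (1 / ψ - 1) * ψ :=
        sum_ite_mul_sum_sub_const _ _ _
          (fun y' ω => eifSummand w Y V X R gi m y' (Y ω) (V ω) (X ω) (R ω)) _
    _ = ∑ y' ∈ S, (-1 : ℝ) ^ (1 + y'.card)
          * ((cexp w (fun ω => gi (V ω) (X ω)) (fun ω => Y ω ≠ ∅) - 1) * ψ) - (1 / ψ - 1) * ψ := by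
        refine congrArg (· - _) (sum_congr rfl fun y' hy' => ?_)
        have hy' := (mem_filter.mp hy').2
        rw [sum_ite_mul_eifSummand hw0 hMAR hy' (fun v x h => (hpos y' hy' v x h).1)
          (fun v x h => (hpos y' hy' v x h).2.2) gi m, sum_ite_mul_sub_const hψ.ne']
    _ = 0 := by rw [← sum_mul, sum_ne_empty_neg_one_pow_one_add_card, hid, one_mul, sub_self]
  rw [cexp_eq_sum_div, hnum, zero_div]

/-- **Mean-zero property of the efficient influence function.** In the
capture-recapture setup, assume MAR and positivity, define
`1/γ(v,x) = 1 + Π_{y ≠ 0} q_y(v,x)^{(−1)^{|y|+1}}` (denoted `gi v x` below), assume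
`E_Q[1/γ(V,X)] = 1/ψ` (which holds under the NHOI conditional log-linear model), and let
`m(v) = E_Q[ 1/γ(V,X) − 1 | V=v ]`.  With the efficient influence function `φ` defined
as in the paper, `E_Q[ φ(Y,V,X,R) ] = 0`. -/
theorem eif_mean_zero
    {Ω 𝒱 𝒳 : Type*} [Fintype Ω] {K : ℕ} (hK : 1 ≤ K)
    (w : Ω → ℝ) (Y : Ω → Finset (Fin K)) (V : Ω → 𝒱) (X : Ω → 𝒳) (R : Ω → Bool)
    (hw0 : ∀ ω, 0 ≤ w ω) (hw1 : ∑ ω, w ω = 1)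
    (hψ : 0 < pr w (fun ω => Y ω ≠ ∅))
    -- MAR: X and R are conditionally independent given (V, Y) under Q
    (hMAR : ∀ (y : Finset (Fin K)) (v : 𝒱) (x : 𝒳) (r : Bool),
      0 < pr w (fun ω => Y ω = y ∧ V ω = v ∧ Y ω ≠ ∅) →
      cpr w (fun ω => X ω = x ∧ R ω = r) (fun ω => Y ω = y ∧ V ω = v ∧ Y ω ≠ ∅)
        = cpr w (fun ω => X ω = x) (fun ω => Y ω = y ∧ V ω = v ∧ Y ω ≠ ∅)
          * cpr w (fun ω => R ω = r) (fun ω => Y ω = y ∧ V ω = v ∧ Y ω ≠ ∅))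
    -- positivity: q_y(v,x), q_y(v), π(y,v) > 0 on the support
    (hpos : ∀ y : Finset (Fin K), y ≠ ∅ → ∀ (v : 𝒱) (x : 𝒳),
      0 < pr w (fun ω => V ω = v ∧ X ω = x ∧ Y ω ≠ ∅) →
      0 < qfull w Y V X y v x ∧ 0 < qV w Y V y v ∧ 0 < piR w Y V R y v)
    -- gi v x = 1/γ(v,x) = 1 + Π_{y ≠ 0} q_y(v,x)^{(−1)^{|y|+1}}
    (gi : 𝒱 → 𝒳 → ℝ)
    (hgi : ∀ (v : 𝒱) (x : 𝒳), gi v x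
      = 1 + ∏ y ∈ Finset.univ.filter (fun y : Finset (Fin K) => y ≠ ∅),
          qfull w Y V X y v x ^ ((-1 : ℤ) ^ (y.card + 1)))
    -- E_Q[1/γ(V,X)] = 1/ψ
    (hid : cexp w (fun ω => gi (V ω) (X ω)) (fun ω => Y ω ≠ ∅)
      = 1 / pr w (fun ω => Y ω ≠ ∅))
    -- m(v) = E_Q[1/γ(V,X) − 1 | V = v]
    (m : 𝒱 → ℝ)
    (hm : ∀ v : 𝒱, m v
      = cexp w (fun ω => gi (V ω) (X ω) - 1) (fun ω => V ω = v ∧ Y ω ≠ ∅))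
    -- the efficient influence function φ(z) for z = (y,v,x,r) with y ≠ 0
    (φ : Finset (Fin K) → 𝒱 → 𝒳 → Bool → ℝ)
    (hφ : ∀ (y : Finset (Fin K)) (v : 𝒱) (x : 𝒳) (r : Bool), φ y v x r
      = (∑ y' ∈ Finset.univ.filter (fun y' : Finset (Fin K) => y' ≠ ∅),
          (-1 : ℝ) ^ (1 + y'.card) *
            (((if r = true then (1 : ℝ) else 0) * (if y = y' then (1 : ℝ) else 0))
                / piR w Y V R y' v *
              ((1 / qfull w Y V X y' v x) * (gi v x - 1)
                - (1 / qV w Y V y' v) * m v)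
            + (if y = y' then (1 : ℝ) else 0) / qV w Y V y' v * m v))
        - (1 / pr w (fun ω => Y ω ≠ ∅) - 1)) :
    cexp w (fun ω => φ (Y ω) (V ω) (X ω) (R ω)) (fun ω => Y ω ≠ ∅) = 0 :=
  eif_mean_zero_general hK w Y V X R hw0 hψ hMAR hpos gi hid m φ hφ
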